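/- arXiv:0805.3824 — 2 statements merged into one kernel-verified Lean document; each statement's English description precedes it below -/
import Mathlib

section
/- Let ρ ∈ ℕ with N ≥ n and let 𝒞 ⊆ 𝔽_q^{n×m} be a code with at least two codewords. Then 𝒞 is guaranteed to correct any t packet errors in the noncoherent model (i.e., 𝒞 is t-discrepancy-correcting for Δ_ρ) if and only if δ_ρ(𝒞) > 2t. -/
/-- The noncoherent discrepancy
`Δ_ρ(X,Y) = min { rank (Y − AX) : A ∈ 𝔽_q^{N×n}, rank A ≥ n − ρ }`. -/
noncomputable def discRho {K : Type*} [Field K] [Fintype K] {n m N : ℕ}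
    (ρ : ℕ) (X : Matrix (Fin n) (Fin m) K) (Y : Matrix (Fin N) (Fin m) K) : ℕ :=
  sInf {r : ℕ | ∃ A : Matrix (Fin N) (Fin n) K, n - ρ ≤ A.rank ∧ r = (Y - A * X).rank}

/-- The Δ-distance `δ_ρ(X,X') = min_Y (Δ_ρ(X,Y) + Δ_ρ(X',Y))`. -/
noncomputable def deltaRho {K : Type*} [Field K] [Fintype K] {n m N : ℕ}
    (ρ : ℕ) (X X' : Matrix (Fin n) (Fin m) K) : ℕ :=
  sInf {e : ℕ | ∃ Y : Matrix (Fin N) (Fin m) K, e = discRho ρ X Y + discRho ρ X' Y}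

/-- `δ_ρ(𝒞)`: the minimum Δ-distance over pairs of distinct codewords. -/
noncomputable def deltaRhoCode {K : Type*} [Field K] [Fintype K] {n m N : ℕ}
    (ρ : ℕ) (C : Set (Matrix (Fin n) (Fin m) K)) : ℕ :=
  sInf {e : ℕ | ∃ X ∈ C, ∃ X' ∈ C, X ≠ X' ∧ e = deltaRho (N := N) ρ X X'}

/-- A code `C` is `t`-discrepancy-correcting for a discrepancy function `Δ` if
no output is within discrepancy `t` of two distinct codewords. -/
def Correcting {α β : Type*} (Δ : α → β → ℕ) (C : Set α) (t : ℕ) : Prop :=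
  ∀ x ∈ C, ∀ x' ∈ C, x ≠ x' → ∀ y : β, ¬(Δ x y ≤ t ∧ Δ x' y ≤ t)

/-!
If `δ_ρ(X, X') ≤ a + b` is attained at an output `Y` with optimal transfer matrices `A`, `A'`,
then `A'X' - AX = (Y - AX) - (Y - A'X')` has rank at most `a + b`. Factoring it through
`𝔽^a ⊕ 𝔽^b` splits it as `F + G` with `rank F ≤ a` and `rank G ≤ b`, and the output
`AX + F = A'X' - G` is within discrepancy `a` of `X` and `b` of `X'`. With `a = b = t` this is
the nontrivial direction; the other one is the triangle-type bound `δ_ρ ≤ Δ_ρ(X,Y) + Δ_ρ(X',Y)`.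
When no `A` has rank `≥ n - ρ`, `Δ_ρ` is an infimum over the empty set, hence identically `0`.
-/

namespace Matrix

variable {K : Type*} [Field K] {m n : Type*} [Fintype n]

theorem rank_add_le (A B : Matrix m n K) : (A + B).rank ≤ A.rank + B.rank := by
  rw [rank, mulVecLin_add]
  exact (Submodule.finrank_mono (LinearMap.range_add_le _ _)).trans
    (Submodule.finrank_add_le_finrank_add_finrank _ _)

theorem rank_neg (A : Matrix m n K) : (-A).rank = A.rank := by
  classical
  rw [rank, rank, ← toLin'_apply', ← toLin'_apply', map_neg, LinearMap.range_neg]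

theorem rank_sub_le (A B : Matrix m n K) : (A - B).rank ≤ A.rank + B.rank := by
  simpa only [sub_eq_add_neg, rank_neg] using rank_add_le A (-B)

theorem exists_mul_eq_of_rank_le_card {ι : Type*} [Fintype ι] (D : Matrix m n K)
    (h : D.rank ≤ Fintype.card ι) : ∃ (B : Matrix m ι K) (C : Matrix ι n K), D = B * C := by
  classical
  set f := D.mulVecLin
  have hf : Module.finrank K (LinearMap.range f) ≤ Module.finrank K (ι → K) := by
    rwa [Module.finrank_fintype_fun_eq_card]
  obtain ⟨j, hj⟩ := finrank_le_iff_exists_linearMap.1 hf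
  obtain ⟨p, hp⟩ := j.exists_leftInverse_of_injective (LinearMap.ker_eq_bot.2 hj)
  refine ⟨LinearMap.toMatrix' ((LinearMap.range f).subtype ∘ₗ p),
    LinearMap.toMatrix' (j ∘ₗ f.rangeRestrict), toLin'.injective ?_⟩
  rw [toLin'_mul, toLin'_toMatrix', toLin'_toMatrix', LinearMap.comp_assoc,
    ← LinearMap.comp_assoc _ j, hp, LinearMap.id_comp, LinearMap.subtype_comp_codRestrict,
    toLin'_apply']

theorem exists_add_eq_of_rank_le_add (D : Matrix m n K) {a b : ℕ} (h : D.rank ≤ a + b) :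
    ∃ F G : Matrix m n K, D = F + G ∧ F.rank ≤ a ∧ G.rank ≤ b := by
  obtain ⟨B, C, rfl⟩ := D.exists_mul_eq_of_rank_le_card (ι := Fin a ⊕ Fin b) (by simpa using h)
  refine ⟨B.toCols₁ * C.toRows₁, B.toCols₂ * C.toRows₂, ?_, ?_, ?_⟩
  · rw [← fromCols_mul_fromRows, fromCols_toCols, fromRows_toRows]
  · exact (rank_mul_le_left _ _).trans ((rank_le_card_width _).trans_eq (Fintype.card_fin a))
  · exact (rank_mul_le_left _ _).trans ((rank_le_card_width _).trans_eq (Fintype.card_fin b))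

end Matrix

section Discrepancy

open Matrix

variable {K : Type*} [Field K] [Fintype K] {n m N : ℕ} {ρ : ℕ}

theorem discRho_le_rank_sub_mul {X : Matrix (Fin n) (Fin m) K} {Y : Matrix (Fin N) (Fin m) K}
    {A : Matrix (Fin N) (Fin n) K} (hA : n - ρ ≤ A.rank) : discRho ρ X Y ≤ (Y - A * X).rank :=
  Nat.sInf_le ⟨A, hA, rfl⟩

theorem exists_discRho_eq_rank_sub_mul {A₀ : Matrix (Fin N) (Fin n) K} (hA₀ : n - ρ ≤ A₀.rank)
    (X : Matrix (Fin n) (Fin m) K) (Y : Matrix (Fin N) (Fin m) K) :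
    ∃ A : Matrix (Fin N) (Fin n) K, n - ρ ≤ A.rank ∧ discRho ρ X Y = (Y - A * X).rank :=
  Nat.sInf_mem (s := {r | ∃ A : Matrix (Fin N) (Fin n) K, n - ρ ≤ A.rank ∧ r = (Y - A * X).rank})
    ⟨_, A₀, hA₀, rfl⟩

theorem discRho_eq_zero_of_forall_rank_lt (h : ∀ A : Matrix (Fin N) (Fin n) K, A.rank < n - ρ)
    (X : Matrix (Fin n) (Fin m) K) (Y : Matrix (Fin N) (Fin m) K) : discRho ρ X Y = 0 :=
  Nat.sInf_eq_zero.2 <| .inr <| Set.eq_empty_of_forall_notMem fun _ ⟨A, hA, _⟩ => (h A).not_ge hA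

theorem deltaRho_le_discRho_add (X X' : Matrix (Fin n) (Fin m) K) (Y : Matrix (Fin N) (Fin m) K) :
    deltaRho (N := N) ρ X X' ≤ discRho ρ X Y + discRho ρ X' Y :=
  Nat.sInf_le ⟨Y, rfl⟩

theorem exists_deltaRho_eq_discRho_add (X X' : Matrix (Fin n) (Fin m) K) :
    ∃ Y : Matrix (Fin N) (Fin m) K, deltaRho (N := N) ρ X X' = discRho ρ X Y + discRho ρ X' Y :=
  Nat.sInf_mem (s := {e | ∃ Y : Matrix (Fin N) (Fin m) K, e = discRho ρ X Y + discRho ρ X' Y})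
    ⟨_, 0, rfl⟩

theorem deltaRho_le_add_iff {X X' : Matrix (Fin n) (Fin m) K} {a b : ℕ} :
    deltaRho (N := N) ρ X X' ≤ a + b ↔
      ∃ Y : Matrix (Fin N) (Fin m) K, discRho ρ X Y ≤ a ∧ discRho ρ X' Y ≤ b := by
  refine ⟨fun h => ?_, fun ⟨Y, hX, hX'⟩ => (deltaRho_le_discRho_add X X' Y).trans (by omega)⟩
  by_cases hadm : ∃ A₀ : Matrix (Fin N) (Fin n) K, n - ρ ≤ A₀.rank
  swap
  · push Not at hadm
    exact ⟨0, by simp [discRho_eq_zero_of_forall_rank_lt hadm]⟩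
  obtain ⟨A₀, hA₀⟩ := hadm
  obtain ⟨Y₀, hY₀⟩ := exists_deltaRho_eq_discRho_add (N := N) (ρ := ρ) X X'
  obtain ⟨A, hA, hXY₀⟩ := exists_discRho_eq_rank_sub_mul hA₀ X Y₀
  obtain ⟨A', hA', hX'Y₀⟩ := exists_discRho_eq_rank_sub_mul hA₀ X' Y₀
  have hD : (A' * X' - A * X).rank ≤ a + b := by
    calc (A' * X' - A * X).rank = ((Y₀ - A * X) - (Y₀ - A' * X')).rank := by
          rw [sub_sub_sub_cancel_left]
      _ ≤ a + b := (rank_sub_le _ _).trans (by omega)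
  obtain ⟨F, G, hFG, hF, hG⟩ := (A' * X' - A * X).exists_add_eq_of_rank_le_add hD
  refine ⟨A * X + F, ?_, ?_⟩
  · calc discRho ρ X (A * X + F) ≤ (A * X + F - A * X).rank := discRho_le_rank_sub_mul hA
      _ ≤ a := by rwa [add_sub_cancel_left]
  · calc discRho ρ X' (A * X + F) ≤ (A * X + F - A' * X').rank := discRho_le_rank_sub_mul hA'
      _ = (-G).rank := congrArg rank (by rw [eq_sub_iff_add_eq.2 hFG.symm]; abel)
      _ ≤ b := by rwa [rank_neg]

end Discrepancy

theorem lt_deltaRhoCode_iff {K : Type*} [Field K] [Fintype K] {n m N ρ : ℕ}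
    {C : Set (Matrix (Fin n) (Fin m) K)} (hC : ∃ X ∈ C, ∃ X' ∈ C, X ≠ X') {k : ℕ} :
    k < deltaRhoCode (N := N) ρ C ↔
      ∀ X ∈ C, ∀ X' ∈ C, X ≠ X' → k < deltaRho (N := N) ρ X X' := by
  refine ⟨fun h X hX X' hX' hne => h.trans_le (Nat.sInf_le ⟨X, hX, X', hX', hne, rfl⟩),
    fun h => ?_⟩
  obtain ⟨X, hX, X', hX', hne⟩ := hC
  obtain ⟨Z, hZ, Z', hZ', hne', hmin⟩ := Nat.sInf_mem
    (s := {e | ∃ X ∈ C, ∃ X' ∈ C, X ≠ X' ∧ e = deltaRho (N := N) ρ X X'})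
    ⟨_, X, hX, X', hX', hne, rfl⟩
  rw [deltaRhoCode, hmin]
  exact h Z hZ Z' hZ' hne'

theorem correcting_iff_deltaRhoCode_general {K : Type*} [Field K] [Fintype K] {n m N : ℕ}
    (ρ : ℕ)
    (C : Set (Matrix (Fin n) (Fin m) K)) (hC : ∃ X ∈ C, ∃ X' ∈ C, X ≠ X')
    (t : ℕ) :
    Correcting (fun X (Y : Matrix (Fin N) (Fin m) K) => discRho ρ X Y) C t ↔
      2 * t < deltaRhoCode (N := N) ρ C := by
  rw [lt_deltaRhoCode_iff hC]
  refine forall₂_congr fun X _ => forall₂_congr fun X' _ => forall_congr' fun _ => ?_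
  rw [two_mul, ← not_le, deltaRho_le_add_iff, not_exists]

/-- A code with at least two codewords corrects any `t` packet errors in the
noncoherent model (is `t`-discrepancy-correcting for `Δ_ρ`) if and only if
`δ_ρ(𝒞) > 2t`. -/
theorem correcting_iff_deltaRhoCode {K : Type*} [Field K] [Fintype K] {n m N : ℕ}
    (hn : 0 < n) (hm : 0 < m) (hN : 0 < N) (hnN : n ≤ N) (ρ : ℕ)
    (C : Set (Matrix (Fin n) (Fin m) K)) (hC : ∃ X ∈ C, ∃ X' ∈ C, X ≠ X')
    (t : ℕ) :
    Correcting (fun X (Y : Matrix (Fin N) (Fin m) K) => discRho ρ X Y) C t ↔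
      2 * t < deltaRhoCode (N := N) ρ C :=
  correcting_iff_deltaRhoCode_general ρ C hC t
end

section
/- Let ρ ∈ ℕ with N ≥ n − ρ. Then for all X ∈ 𝔽_q^{n×m} and Y ∈ 𝔽_q^{N×m}, 2·Δ_ρ(X,Y) = d_S(⟨X⟩, ⟨Y⟩) − ρ + |rank X − rank Y − ρ|, where d_S is the subspace distance. -/
/-- The row space of a matrix: the span of its rows in `𝔽_q^m`. -/
noncomputable def rowSpace {K : Type*} [Field K] {a b : ℕ}
    (X : Matrix (Fin a) (Fin b) K) : Submodule K (Fin b → K) :=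
  Submodule.span K (Set.range fun i => X i)

/-- The subspace distance between two subspaces of `𝔽_q^m`:
`d_S(U,V) = dim (U + V) − dim (U ∩ V)`. -/
noncomputable def subDist {K : Type*} [Field K] {m : ℕ}
    (U V : Submodule K (Fin m → K)) : ℕ :=
  Module.finrank K ↥(U ⊔ V) - Module.finrank K ↥(U ⊓ V)

open Module Submodule LinearMap

section

variable {K V F : Type*} [Field K] [AddCommGroup V] [Module K V] [AddCommGroup F] [Module K F]

theorem Submodule.exists_le_finrank_eq (P : Submodule K V) {d : ℕ} (hd : d ≤ finrank K P) :
    ∃ Q ≤ P, finrank K Q = d := by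
  obtain ⟨v, hv⟩ := exists_linearIndependent_of_le_finrank hd
  refine ⟨map P.subtype (span K (Set.range v)), map_subtype_le _ _, ?_⟩
  rw [finrank_map_subtype_eq, finrank_span_eq_card hv, Fintype.card_fin]

theorem Submodule.finrank_comap_subtype (p q : Submodule K V) :
    finrank K (q.comap p.subtype) = finrank K ↥(p ⊓ q) := by
  rw [← finrank_map_subtype_eq, map_comap_subtype]

theorem Submodule.exists_disjoint_finrank_eq [FiniteDimensional K V] (P : Submodule K V) {d : ℕ}
    (hd : finrank K P + d ≤ finrank K V) : ∃ Q, Disjoint P Q ∧ finrank K Q = d := by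
  obtain ⟨C, hC⟩ := P.exists_isCompl
  obtain ⟨Q, hQC, hQ⟩ := C.exists_le_finrank_eq (d := d) (by
    have := finrank_add_eq_of_isCompl hC; omega)
  exact ⟨Q, hC.disjoint.mono_right hQC, hQ⟩

theorem LinearMap.exists_range_eq [FiniteDimensional K V] [FiniteDimensional K F]
    (Q : Submodule K F) (hQ : finrank K Q ≤ finrank K V) : ∃ ξ : V →ₗ[K] F, range ξ = Q := by
  obtain ⟨P, -, hP⟩ :=
    (⊤ : Submodule K V).exists_le_finrank_eq (d := finrank K Q) (by rwa [finrank_top])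
  obtain ⟨C, hC⟩ := P.exists_isCompl
  refine ⟨ofIsCompl hC (Q.subtype ∘ₗ (LinearEquiv.ofFinrankEq P Q hP).toLinearMap) 0, ?_⟩
  simp [range_comp]

theorem LinearMap.exists_extend_range_eq [FiniteDimensional K V] [FiniteDimensional K F]
    (W : Submodule K V) (φ₀ : W →ₗ[K] F) (Q : Submodule K F)
    (hQ : finrank K Q + finrank K W ≤ finrank K V) :
    ∃ φ : V →ₗ[K] F, φ ∘ₗ W.subtype = φ₀ ∧ range φ = range φ₀ ⊔ Q := by
  obtain ⟨C, hC⟩ := W.exists_isCompl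
  obtain ⟨ψ, hψ⟩ := exists_range_eq (V := C) Q (by have := finrank_add_eq_of_isCompl hC; omega)
  exact ⟨ofIsCompl hC φ₀ ψ, by ext; simp, by rw [range_ofIsCompl, hψ]⟩

variable {M P : Type*} [AddCommGroup M] [Module K M] [AddCommGroup P] [Module K P]

theorem Submodule.finrank_le_finrank_map_add_finrank_ker [FiniteDimensional K F]
    (f : F →ₗ[K] M) (p : Submodule K F) :
    finrank K p ≤ finrank K (p.map f) + finrank K (ker f) := by
  have hrn := finrank_range_add_finrank_ker (f.domRestrict p)
  rw [range_domRestrict, ker_domRestrict, finrank_comap_subtype] at hrn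
  have hker := finrank_mono (inf_le_right : p ⊓ ker f ≤ ker f)
  omega

theorem LinearMap.exists_comp_eq_of_range_le (f : F →ₗ[K] M) (h : P →ₗ[K] M)
    (hle : range h ≤ range f) : ∃ l : P →ₗ[K] F, f ∘ₗ l = h := by
  obtain ⟨l, hl⟩ := Module.projective_lifting_property f.rangeRestrict
    (h.codRestrict (range f) fun x => hle ⟨x, rfl⟩) f.surjective_rangeRestrict
  exact ⟨l, by ext x; simpa using congr(($hl x : M))⟩

theorem LinearMap.disjoint_range_ker_of_injective_comp {l : P →ₗ[K] F} {f : F →ₗ[K] M}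
    (h : Function.Injective (f ∘ₗ l)) : Disjoint (range l) (ker f) := by
  rw [disjoint_iff_inf_le]
  rintro _ ⟨⟨p, rfl⟩, hp⟩
  obtain rfl : p = 0 := h (by simpa using hp)
  simp

end

section

variable {K E F M : Type*} [Field K] [AddCommGroup E] [Module K E] [AddCommGroup F] [Module K F]
  [AddCommGroup M] [Module K M]

theorem LinearMap.exists_comp_rangeRestrict_add (g : E →ₗ[K] M) (φ : range g →ₗ[K] F)
    (ξ : ker g →ₗ[K] F) :
    ∃ α : E →ₗ[K] F, range φ ⊔ range ξ ≤ range α ∧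
      ∀ x, α x - φ (g.rangeRestrict x) ∈ range ξ := by
  obtain ⟨G, hG⟩ := (ker g).exists_isCompl
  set p := (ker g).projectionOnto G hG
  have hgp : ∀ x, g.rangeRestrict (p x) = 0 := fun x => Subtype.ext (p x).2
  have hpp : ∀ x, p (p x) = p x := fun x => projectionOnto_apply_left hG (p x)
  refine ⟨φ ∘ₗ g.rangeRestrict + ξ ∘ₗ p, sup_le ?_ ?_, fun x => ⟨p x, by simp⟩⟩
  · rintro _ ⟨v, rfl⟩
    obtain ⟨x, rfl⟩ := g.surjective_rangeRestrict v
    exact ⟨x - p x, by simp [hgp, hpp]⟩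
  · rintro _ ⟨k, rfl⟩
    have hk : g.rangeRestrict k = 0 := Subtype.ext k.2
    exact ⟨k, by simp [hk, p, projectionOnto_apply_left]⟩

theorem finrank_range_sub_comp_add_finrank_inf_le [FiniteDimensional K E] [FiniteDimensional K F]
    (f : F →ₗ[K] M) (g : E →ₗ[K] M) (φ : range g →ₗ[K] F)
    (hφ : ∀ v : range g, (v : M) ∈ range f → f (φ v) = v) (α : E →ₗ[K] F) (R : Submodule K F)
    (hα : ∀ x, α x - φ (g.rangeRestrict x) ∈ R) :
    finrank K (range (g - f ∘ₗ α)) + finrank K ↥(range f ⊓ range g) ≤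
      finrank K (range g) + finrank K (R.map f) := by
  set h := (range g).subtype - f ∘ₗ φ
  set W := comap (range g).subtype (range f)
  have hWh : W ≤ ker h := fun v hv => by simp [h, hφ v hv]
  have hW : finrank K W = finrank K ↥(range f ⊓ range g) := by
    rw [finrank_comap_subtype, inf_comm]
  have hle : range (g - f ∘ₗ α) ≤ range h ⊔ R.map f := by
    rintro _ ⟨x, rfl⟩
    have key : (g - f ∘ₗ α) x = h (g.rangeRestrict x) - f (α x - φ (g.rangeRestrict x)) := by
      simp [h]
    rw [key]
    exact sub_mem (mem_sup_left ⟨_, rfl⟩) (mem_sup_right ⟨_, hα x, rfl⟩)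
  have hrn := finrank_range_add_finrank_ker h
  have hker := finrank_mono hWh
  have hZ := (finrank_mono hle).trans (finrank_add_le_finrank_add_finrank _ _)
  omega

theorem exists_disjoint_finrank_eq_finrank_map_le [FiniteDimensional K F] (f : F →ₗ[K] M)
    {B : Submodule K F} (hB : Disjoint B (ker f)) {d e : ℕ} (hd : d ≤ finrank K (ker f) + e)
    (he : finrank K B + finrank K (ker f) + e ≤ finrank K F) :
    ∃ Q, Disjoint B Q ∧ finrank K Q = d ∧ finrank K (Q.map f) ≤ e := by
  obtain ⟨D, hD, hDe⟩ := (B ⊔ ker f).exists_disjoint_finrank_eq (d := e)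
    (by have := finrank_add_le_finrank_add_finrank B (ker f); omega)
  have hkD : finrank K ↥(ker f ⊔ D) = finrank K (ker f) + e := by
    rw [← hDe, ← finrank_sup_add_finrank_inf_eq, (hD.mono_left le_sup_right).eq_bot, finrank_bot,
      add_zero]
  obtain ⟨Q, hQ, rfl⟩ := (ker f ⊔ D).exists_le_finrank_eq (d := d) (hkD ▸ hd)
  refine ⟨Q, (hB.disjoint_sup_right_of_disjoint_sup_left hD).mono_right hQ, rfl, ?_⟩
  have hmap : Q.map f ≤ D.map f := by
    refine (map_mono hQ).trans ?_
    rw [Submodule.map_sup, le_ker_iff_map.mp le_rfl, bot_sup_eq]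
  exact (finrank_mono hmap).trans (hDe ▸ finrank_map_le f D)


variable [FiniteDimensional K E] [FiniteDimensional K F]

theorem finrank_range_le_finrank_range_sub_comp_add (f : F →ₗ[K] M) (g : E →ₗ[K] M)
    (α : E →ₗ[K] F) :
    finrank K (range g) ≤ finrank K (range (g - f ∘ₗ α)) + finrank K ↥(range f ⊓ range g) := by
  have hle : range f ⊔ range g ≤ range f ⊔ range (g - f ∘ₗ α) := by
    refine sup_le le_sup_left ?_
    rintro _ ⟨x, rfl⟩
    rw [← sub_add_cancel (g x) (f (α x))]
    exact add_mem (mem_sup_right ⟨x, rfl⟩) (mem_sup_left ⟨α x, rfl⟩)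
  have hUV := finrank_sup_add_finrank_inf_eq (range f) (range g)
  have hUZ := (finrank_mono hle).trans (finrank_add_le_finrank_add_finrank _ _)
  omega

theorem finrank_range_add_le_finrank_range_sub_comp_add (f : F →ₗ[K] M) (g : E →ₗ[K] M)
    (α : E →ₗ[K] F) :
    finrank K (range α) + finrank K (range f) ≤
      finrank K (range (g - f ∘ₗ α)) + finrank K ↥(range f ⊓ range g) + finrank K F := by
  have hPZ : (range α).map f ⊔ range g ≤ range (g - f ∘ₗ α) ⊔ range g := by
    refine sup_le ?_ le_sup_right
    rintro _ ⟨_, ⟨x, rfl⟩, rfl⟩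
    rw [← sub_sub_cancel (g x) (f (α x))]
    exact sub_mem (mem_sup_right ⟨x, rfl⟩) (mem_sup_left ⟨x, rfl⟩)
  have hPV : (range α).map f ⊓ range g ≤ range f ⊓ range g := inf_le_inf_right _ map_le_range
  have hPV' := finrank_sup_add_finrank_inf_eq ((range α).map f) (range g)
  have hZV := (finrank_mono hPZ).trans (finrank_add_le_finrank_add_finrank _ _)
  have ht := finrank_mono hPV
  have hα := finrank_le_finrank_map_add_finrank_ker f (range α)
  have hf := finrank_range_add_finrank_ker f
  omega

theorem exists_partial_lift_and_map_ker (f : F →ₗ[K] M) (g : E →ₗ[K] M) {ρ : ℕ}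
    (hρ : finrank K F - ρ ≤ finrank K E) :
    ∃ (φ : range g →ₗ[K] F) (ξ : ker g →ₗ[K] F),
      (∀ v : range g, (v : M) ∈ range f → f (φ v) = v) ∧
      finrank K ((range ξ).map f) ≤ finrank K (range f) - ρ - finrank K (range g) ∧
      finrank K F - ρ ≤ finrank K ↥(range φ ⊔ range ξ) := by
  set W := (range f).comap (range g).subtype
  obtain ⟨φ₀, hφ₀⟩ := exists_comp_eq_of_range_le f ((range g).subtype ∘ₗ W.subtype) (by
    rintro _ ⟨w, rfl⟩; exact w.2)
  have hinj : Function.Injective (f ∘ₗ φ₀) := by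
    rw [hφ₀]; exact Subtype.val_injective.comp Subtype.val_injective
  have hB : finrank K (range φ₀) = finrank K ↥(range g ⊓ range f) := by
    rw [finrank_range_of_inj (Function.Injective.of_comp (f := f) hinj), finrank_comap_subtype]
  have hf := finrank_range_add_finrank_ker f
  have hg := finrank_range_add_finrank_ker g
  have ht := finrank_mono (inf_le_left : range g ⊓ range f ≤ range g)
  have ht' := finrank_mono (inf_le_right : range g ⊓ range f ≤ range f)
  obtain ⟨Q, hBQ, hQ, hQf⟩ := exists_disjoint_finrank_eq_finrank_map_le f
    (disjoint_range_ker_of_injective_comp hinj) (min_le_right (finrank K (ker g)) _)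
    (e := finrank K (range f) - ρ - finrank K (range g)) (by omega)
  obtain ⟨ξ, rfl⟩ := exists_range_eq (V := ker g) Q (hQ.trans_le (min_le_left _ _))
  have hBQd := finrank_sup_add_finrank_inf_eq (range φ₀) (range ξ)
  rw [hBQ.eq_bot, finrank_bot] at hBQd
  obtain ⟨Q₃, hQ₃, hQ₃d⟩ := (range φ₀ ⊔ range ξ).exists_disjoint_finrank_eq
    (d := min (finrank K (range g) - finrank K (range φ₀))
      (finrank K F - finrank K ↥(range φ₀ ⊔ range ξ))) (by omega)
  obtain ⟨φ, hφφ₀, hφ⟩ := exists_extend_range_eq W φ₀ Q₃ (by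
    rw [finrank_comap_subtype]; omega)
  refine ⟨φ, ξ, fun v hv => ?_, hQf, ?_⟩
  · simpa [← hφφ₀] using congr($hφ₀ ⟨v, hv⟩)
  · have hd := finrank_sup_add_finrank_inf_eq (range φ₀ ⊔ range ξ) Q₃
    rw [hQ₃.eq_bot, finrank_bot, ← sup_right_comm, ← hφ] at hd
    omega

theorem exists_finrank_range_sub_comp_le (f : F →ₗ[K] M) (g : E →ₗ[K] M) {ρ : ℕ}
    (hρ : finrank K F - ρ ≤ finrank K E) :
    ∃ α : E →ₗ[K] F, finrank K F - ρ ≤ finrank K (range α) ∧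
      finrank K (range (g - f ∘ₗ α)) ≤ finrank K (range g) - finrank K ↥(range f ⊓ range g) +
        (finrank K (range f) - ρ - finrank K (range g)) := by
  obtain ⟨φ, ξ, hφ, hξ, hrank⟩ := exists_partial_lift_and_map_ker f g hρ
  obtain ⟨α, hle, hα⟩ := exists_comp_rangeRestrict_add g φ ξ
  refine ⟨α, hrank.trans (finrank_mono hle), ?_⟩
  have hcost := finrank_range_sub_comp_add_finrank_inf_le f g φ hφ α _ hα
  have ht := finrank_mono (inf_le_right : range f ⊓ range g ≤ range g)
  omega

theorem isLeast_finrank_range_sub_comp (f : F →ₗ[K] M) (g : E →ₗ[K] M) {ρ : ℕ}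
    (hρ : finrank K F - ρ ≤ finrank K E) :
    IsLeast {r | ∃ α : E →ₗ[K] F, finrank K F - ρ ≤ finrank K (range α) ∧
        r = finrank K (range (g - f ∘ₗ α))}
      (finrank K (range g) - finrank K ↥(range f ⊓ range g) +
        (finrank K (range f) - ρ - finrank K (range g))) := by
  have htU := finrank_mono (inf_le_left : range f ⊓ range g ≤ range f)
  have htV := finrank_mono (inf_le_right : range f ⊓ range g ≤ range g)
  have hlower (α : E →ₗ[K] F) (hα : finrank K F - ρ ≤ finrank K (range α)) :
      finrank K (range g) - finrank K ↥(range f ⊓ range g) +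
        (finrank K (range f) - ρ - finrank K (range g)) ≤ finrank K (range (g - f ∘ₗ α)) := by
    have h₁ := finrank_range_le_finrank_range_sub_comp_add f g α
    have h₂ := finrank_range_add_le_finrank_range_sub_comp_add f g α
    omega
  obtain ⟨α, hα, hle⟩ := exists_finrank_range_sub_comp_le f g hρ
  exact ⟨⟨α, hα, (hle.antisymm (hlower α hα)).symm⟩, fun _ ⟨α, hα, hr⟩ => hr ▸ hlower α hα⟩

end

section Matrix

variable {K : Type*} [Field K] {n m N : ℕ}

theorem rowSpace_eq_range_vecMulLinear (X : Matrix (Fin n) (Fin m) K) :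
    rowSpace X = range X.vecMulLinear := by
  rw [rowSpace, range_vecMulLinear]
  rfl

theorem Matrix.rank_eq_finrank_range_vecMulLinear {ι κ : Type*} [Fintype ι] [Fintype κ]
    (A : Matrix ι κ K) : A.rank = finrank K (range A.vecMulLinear) := by
  rw [rank_eq_finrank_span_row, range_vecMulLinear]

theorem Matrix.vecMulLinear_sub_mul {ι κ μ : Type*} [Fintype ι] [Fintype κ] (Y : Matrix ι μ K)
    (A : Matrix ι κ K) (X : Matrix κ μ K) :
    (Y - A * X).vecMulLinear = Y.vecMulLinear - X.vecMulLinear ∘ₗ A.vecMulLinear := by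
  refine LinearMap.ext fun v => ?_
  simp [Matrix.vecMul_vecMul]

theorem discRho_eq [Fintype K] {ρ : ℕ} (hNρ : n - ρ ≤ N) (X : Matrix (Fin n) (Fin m) K)
    (Y : Matrix (Fin N) (Fin m) K) :
    discRho ρ X Y = finrank K (rowSpace Y) - finrank K ↥(rowSpace X ⊓ rowSpace Y) +
      (finrank K (rowSpace X) - ρ - finrank K (rowSpace Y)) := by
  have hS : {r : ℕ | ∃ A : Matrix (Fin N) (Fin n) K, n - ρ ≤ A.rank ∧ r = (Y - A * X).rank} =
      {r | ∃ α : (Fin N → K) →ₗ[K] (Fin n → K), finrank K (Fin n → K) - ρ ≤ finrank K (range α) ∧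
        r = finrank K (range (Y.vecMulLinear - X.vecMulLinear ∘ₗ α))} := by
    ext r
    simp only [Set.mem_ofPred_eq, Matrix.rank_eq_finrank_range_vecMulLinear,
      finrank_fin_fun]
    constructor
    · rintro ⟨A, hA, rfl⟩
      exact ⟨A.vecMulLinear, hA, by rw [Matrix.vecMulLinear_sub_mul]⟩
    · rintro ⟨α, hα, rfl⟩
      refine ⟨toMatrixRight' α, ?_⟩
      rw [Matrix.vecMulLinear_sub_mul,
        show (toMatrixRight' α).vecMulLinear = α from toMatrixRight'.symm_apply_apply α]
      exact ⟨hα, rfl⟩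
  have hρ : finrank K (Fin n → K) - ρ ≤ finrank K (Fin N → K) := by
    rwa [finrank_fin_fun, finrank_fin_fun]
  rw [discRho, hS, (isLeast_finrank_range_sub_comp _ _ hρ).csInf_eq,
    rowSpace_eq_range_vecMulLinear, rowSpace_eq_range_vecMulLinear]

end Matrix

theorem two_discRho_eq_general {K : Type*} [Field K] [Fintype K] {n m N : ℕ}
    (ρ : ℕ) (hNρ : n - ρ ≤ N)
    (X : Matrix (Fin n) (Fin m) K) (Y : Matrix (Fin N) (Fin m) K) :
    2 * (discRho ρ X Y : ℤ) =
      (subDist (rowSpace X) (rowSpace Y) : ℤ) - ρ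
        + |(X.rank : ℤ) - (Y.rank : ℤ) - ρ| := by
  have hsup := finrank_sup_add_finrank_inf_eq (rowSpace X) (rowSpace Y)
  have htX := finrank_mono (inf_le_left : rowSpace X ⊓ rowSpace Y ≤ rowSpace X)
  have htY := finrank_mono (inf_le_right : rowSpace X ⊓ rowSpace Y ≤ rowSpace Y)
  rw [discRho_eq hNρ, subDist, Matrix.rank_eq_finrank_range_vecMulLinear,
    Matrix.rank_eq_finrank_range_vecMulLinear, ← rowSpace_eq_range_vecMulLinear,
    ← rowSpace_eq_range_vecMulLinear]
  rcases le_total ((finrank K (rowSpace X) : ℤ) - finrank K (rowSpace Y) - ρ) 0 with h | h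
  · rw [abs_of_nonpos h]; omega
  · rw [abs_of_nonneg h]; omega

/-- For `N ≥ n − ρ`,
`2Δ_ρ(X,Y) = d_S(⟨X⟩,⟨Y⟩) − ρ + |rank X − rank Y − ρ|`, over the integers. -/
theorem two_discRho_eq {K : Type*} [Field K] [Fintype K] {n m N : ℕ}
    (hn : 0 < n) (hm : 0 < m) (hN : 0 < N) (ρ : ℕ) (hNρ : n - ρ ≤ N)
    (X : Matrix (Fin n) (Fin m) K) (Y : Matrix (Fin N) (Fin m) K) :
    2 * (discRho ρ X Y : ℤ) =
      (subDist (rowSpace X) (rowSpace Y) : ℤ) - ρ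
        + |(X.rank : ℤ) - (Y.rank : ℤ) - ρ| :=
  two_discRho_eq_general ρ hNρ X Y
end
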